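/- Let a₀ ∈ ℂ, let l > 0, and let ε ∈ ℂ with |ε| = 1. Define f(z) = a₀ + (l/π)·Log((1+εz)/(1−εz)) on the open unit disk U. Then f is holomorphic and injective on U, |f'(0)| = 2l/π, and f(U) contains no closed vertical segment of length greater than l. -/

import Mathlib

/-!
The Cayley transform `w ↦ (1 + w) / (1 - w)` is injective and maps the unit disk into the right
half-plane, where `Log` is injective with imaginary part `arg ∈ (-π/2, π/2)`. Hence `f` is
injective and maps the disk into the horizontal strip `|Im w - Im a₀| < l / 2`, which contains no
vertical segment of length `l` or more. The derivative of the Cayley transform at `0` is `2`.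
-/

open Complex Metric Set
open scoped Real

section NormedRing

variable {R : Type*} [NormedRing R] [NormOneClass R] {w : R}

theorem ne_one_of_norm_lt_one (hw : ‖w‖ < 1) : w ≠ 1 := by
  rintro rfl
  simp at hw

theorem one_sub_ne_zero_of_norm_lt_one (hw : ‖w‖ < 1) : 1 - w ≠ 0 :=
  sub_ne_zero.mpr (ne_one_of_norm_lt_one hw).symm

theorem one_add_ne_zero_of_norm_lt_one (hw : ‖w‖ < 1) : 1 + w ≠ 0 := by
  simpa using one_sub_ne_zero_of_norm_lt_one (w := -w) (by simpa using hw)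

end NormedRing

theorem injOn_one_add_div_one_sub {K : Type*} [Field K] [NeZero (2 : K)] :
    InjOn (fun w : K => (1 + w) / (1 - w)) {1}ᶜ := by
  intro a ha b hb hab
  have ha' : 1 - a ≠ 0 := sub_ne_zero.mpr (Ne.symm ha)
  have hb' : 1 - b ≠ 0 := sub_ne_zero.mpr (Ne.symm hb)
  rw [div_eq_div_iff ha' hb'] at hab
  have h2 : (2 : K) * a = 2 * b := by linear_combination hab
  exact mul_left_cancel₀ two_ne_zero h2

namespace Complex

theorem re_one_add_div_one_sub_pos {w : ℂ} (hw : ‖w‖ < 1) :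
    0 < ((1 + w) / (1 - w)).re := by
  have hnormSq : normSq w < 1 := by
    rw [normSq_eq_norm_sq]
    nlinarith [norm_nonneg w]
  rw [normSq_apply] at hnormSq
  rw [div_re, ← add_div]
  refine div_pos ?_ (normSq_pos.mpr (one_sub_ne_zero_of_norm_lt_one hw))
  simp only [add_re, sub_re, add_im, sub_im, one_re, one_im]
  nlinarith

theorem injOn_log : InjOn log {0}ᶜ := fun a ha b hb hab => by
  rw [← exp_log ha, ← exp_log hb, hab]

theorem hasDerivAt_log_one_add_div_one_sub {w : ℂ} (hw : ‖w‖ < 1) :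
    HasDerivAt (fun w => log ((1 + w) / (1 - w))) (2 / ((1 - w) * (1 + w))) w := by
  have hsub := one_sub_ne_zero_of_norm_lt_one hw
  have hadd := one_add_ne_zero_of_norm_lt_one hw
  have hq : HasDerivAt (fun w => (1 + w) / (1 - w)) (2 / (1 - w) ^ 2) w :=
    (((hasDerivAt_id' w).const_add 1).fun_div ((hasDerivAt_id' w).const_sub 1) hsub).congr_deriv
      (by ring)
  convert hq.clog (mem_slitPlane_iff.mpr (.inl (re_one_add_div_one_sub_pos hw))) using 1
  field_simp

theorem abs_im_log_lt_pi_div_two {q : ℂ} (hq : 0 < q.re) : |(log q).im| < π / 2 := by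
  rw [log_im]
  exact abs_arg_lt_pi_div_two_iff.mpr (Or.inl hq)

theorem injOn_log_one_add_div_one_sub :
    InjOn (fun w => log ((1 + w) / (1 - w))) (ball 0 1) := by
  refine injOn_log.comp (injOn_one_add_div_one_sub.mono fun w hw => ?_) fun w hw => ?_
  · exact ne_one_of_norm_lt_one (mem_ball_zero_iff.mp hw)
  · rw [mem_ball_zero_iff] at hw
    exact div_ne_zero (one_add_ne_zero_of_norm_lt_one hw) (one_sub_ne_zero_of_norm_lt_one hw)

theorem length_lt_of_vertical_segment_subset {S : Set ℂ} {c l : ℝ}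
    (hS : ∀ w ∈ S, |w.im - c| < l / 2) {u₀ v₀ l' : ℝ} (hl' : 0 ≤ l')
    (h : ∀ t ∈ Icc v₀ (v₀ + l'), (u₀ : ℂ) + I * t ∈ S) : l' < l := by
  have hbot := hS _ (h v₀ ⟨le_rfl, by linarith⟩)
  have htop := hS _ (h (v₀ + l') ⟨by linarith, le_rfl⟩)
  simp only [add_im, ofReal_im, mul_im, I_re, I_im, ofReal_re, zero_mul, one_mul, zero_add]
    at hbot htop
  rw [abs_lt] at hbot htop
  linarith

end Complex

/-- The extremal functions `f(z) = a₀ + (l/π)·Log((1+εz)/(1-εz))` (with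
`|ε| = 1`, `l > 0`) are holomorphic and injective on the unit disk, satisfy
`|f'(0)| = 2l/π`, and their image contains no closed vertical segment of length
greater than `l`. -/
theorem extremal_function_properties
    (a₀ : ℂ) (l : ℝ) (hl : 0 < l) (ε : ℂ) (hε : ‖ε‖ = 1)
    (f : ℂ → ℂ)
    (hf : ∀ z, f z = a₀ + ((l : ℂ) / (Real.pi : ℂ)) * Complex.log ((1 + ε * z) / (1 - ε * z))) :
    DifferentiableOn ℂ f (ball (0 : ℂ) 1) ∧
    InjOn f (ball (0 : ℂ) 1) ∧
    ‖deriv f 0‖ = 2 * l / Real.pi ∧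
    (∀ u₀ v₀ l' : ℝ, l' > l →
      ¬ (∀ t ∈ Icc v₀ (v₀ + l'),
        (u₀ : ℂ) + Complex.I * (t : ℂ) ∈ f '' ball (0 : ℂ) 1)) := by
  have hεz : ∀ z ∈ ball (0 : ℂ) 1, ‖ε * z‖ < 1 := fun z hz => by
    rwa [norm_mul, hε, one_mul, ← mem_ball_zero_iff]
  have hderiv : ∀ z ∈ ball (0 : ℂ) 1,
      HasDerivAt f (l / π * (2 / ((1 - ε * z) * (1 + ε * z)) * ε)) z := by
    intro z hz
    rw [funext hf]
    exact (((hasDerivAt_log_one_add_div_one_sub (hεz z hz)).comp z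
      (hasDerivAt_const_mul ε)).const_mul _).const_add a₀
  have him : ∀ z ∈ ball (0 : ℂ) 1, |(f z).im - a₀.im| < l / 2 := by
    intro z hz
    have hlog := abs_im_log_lt_pi_div_two (re_one_add_div_one_sub_pos (hεz z hz))
    rw [hf, ← ofReal_div, add_im, add_sub_cancel_left, im_ofReal_mul, abs_mul,
      abs_of_pos (by positivity)]
    calc _ < l / π * (π / 2) := by gcongr
      _ = l / 2 := by field_simp
  refine ⟨fun z hz => (hderiv z hz).differentiableAt.differentiableWithinAt, ?_, ?_, ?_⟩
  · intro z₁ h₁ z₂ h₂ heq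
    rw [hf, hf, add_right_inj, mul_right_inj' (by simp [hl.ne', Real.pi_ne_zero])] at heq
    refine mul_left_cancel₀ (norm_ne_zero_iff.mp (hε ▸ one_ne_zero) : ε ≠ 0) ?_
    exact injOn_log_one_add_div_one_sub (mem_ball_zero_iff.mpr (hεz z₁ h₁))
      (mem_ball_zero_iff.mpr (hεz z₂ h₂)) heq
  · rw [(hderiv 0 (mem_ball_self one_pos)).deriv]
    simp only [mul_zero, sub_zero, add_zero, mul_one, div_one, norm_mul, norm_div, norm_real,
      Real.norm_eq_abs, abs_of_pos hl, abs_of_pos Real.pi_pos, norm_ofNat, hε]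
    ring
  · intro u₀ v₀ l' hl' hseg
    exact (length_lt_of_vertical_segment_subset (forall_mem_image.2 him) (by linarith) hseg).not_gt
      hl'
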